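/- arXiv:1906.05163 — 2 statements merged into one kernel-verified Lean document; each statement's English description precedes it below -/
import Mathlib

section
/- Let G' be a graph and let G be the split graph with vertex set A ∪ B, where A = V(G') forms a clique, B = {w_e : e ∈ E(G')} forms an independent set, and each w_e for e = uv ∈ E(G') is adjacent exactly to u and v. Then a nonempty subset C ⊆ A is a vertex cover of G' if and only if C is a dominating set of G. -/
def Dominates {V : Type*} (G : SimpleGraph V) (D : Set V) : Prop :=
  ∀ v, ∃ d ∈ D, d = v ∨ G.Adj d v

/-- The split graph built from `G'`: the vertices of `G'` form a clique `A`, and for each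
edge `e` of `G'` there is a vertex `w_e` adjacent exactly to the endpoints of `e`. -/
def splitOf {V : Type*} (G' : SimpleGraph V) : SimpleGraph (V ⊕ G'.edgeSet) where
  Adj a b :=
    match a, b with
    | Sum.inl u, Sum.inl v => u ≠ v
    | Sum.inl u, Sum.inr e => u ∈ (e : Sym2 V)
    | Sum.inr e, Sum.inl u => u ∈ (e : Sym2 V)
    | Sum.inr _, Sum.inr _ => False
  symm := ⟨by rintro (u | e) (v | f) h <;> simp_all [Ne, eq_comm]⟩
  loopless := ⟨by rintro (u | e) h <;> simp_all⟩

namespace SimpleGraph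

variable {V : Type*} {G' : SimpleGraph V} {C : Set V}

theorem isVertexCover_iff_forall_mem_edgeSet :
    G'.IsVertexCover C ↔ ∀ e ∈ G'.edgeSet, ∃ c ∈ C, c ∈ e := by
  refine ⟨fun hC e he ↦ ?_, fun hC u v huv ↦ ?_⟩
  · induction e with
    | h u v =>
      rcases hC he with hu | hv
      · exact ⟨u, hu, Sym2.mem_mk_left u v⟩
      · exact ⟨v, hv, Sym2.mem_mk_right u v⟩
  · obtain ⟨c, hc, hcuv⟩ := hC s(u, v) huv
    rcases Sym2.mem_iff.mp hcuv with rfl | rfl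
    exacts [Or.inl hc, Or.inr hc]

end SimpleGraph

section splitOf

variable {V : Type*} {G' : SimpleGraph V} {C : Set V}

@[simp]
theorem splitOf_adj_inl_inl {u v : V} : (splitOf G').Adj (Sum.inl u) (Sum.inl v) ↔ u ≠ v :=
  Iff.rfl

@[simp]
theorem splitOf_adj_inl_inr {u : V} {e : G'.edgeSet} :
    (splitOf G').Adj (Sum.inl u) (Sum.inr e) ↔ u ∈ (e : Sym2 V) :=
  Iff.rfl

theorem exists_mem_image_inl_dominating_inl (hne : C.Nonempty) (v : V) :
    ∃ d ∈ Sum.inl '' C, d = Sum.inl v ∨ (splitOf G').Adj d (Sum.inl v) := by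
  obtain ⟨c, hc⟩ := hne
  refine ⟨Sum.inl c, Set.mem_image_of_mem _ hc, ?_⟩
  rw [splitOf_adj_inl_inl, Sum.inl.injEq]
  exact eq_or_ne c v

theorem exists_mem_image_inl_dominating_inr_iff (e : G'.edgeSet) :
    (∃ d ∈ Sum.inl '' C, d = Sum.inr e ∨ (splitOf G').Adj d (Sum.inr e)) ↔
      ∃ c ∈ C, c ∈ (e : Sym2 V) := by
  simp

theorem dominates_splitOf_image_inl_iff (hne : C.Nonempty) :
    Dominates (splitOf G') (Sum.inl '' C) ↔ ∀ e ∈ G'.edgeSet, ∃ c ∈ C, c ∈ e := by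
  rw [Dominates, Sum.forall]
  simp only [exists_mem_image_inl_dominating_inr_iff, Subtype.forall]
  exact and_iff_right (exists_mem_image_inl_dominating_inl hne)

end splitOf

/-- A nonempty subset `C ⊆ A = V(G')` is a vertex cover of `G'` iff it is a dominating
set of the split graph `splitOf G'`. -/
theorem vertexCover_iff_dominates_split {V : Type*} (G' : SimpleGraph V) (C : Set V)
    (hne : C.Nonempty) :
    (∀ u v, G'.Adj u v → u ∈ C ∨ v ∈ C) ↔ Dominates (splitOf G') (Sum.inl '' C) := by
  rw [dominates_splitOf_image_inl_iff hne]
  exact G'.isVertexCover_iff_forall_mem_edgeSet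
end

section
/- Let G be a graph, C ⊆ V(G) a domination core of G, and v_r ∈ V(G) \ C. Then a set D ⊆ V(G) \ {v_r} is a dominating set of G if and only if D is a dominating set of the induced subgraph G[V(G) \ {v_r}]. -/
def DomCore {V : Type*} (G : SimpleGraph V) (C : Set V) : Prop :=
  ∀ D : Set V, Dominates G D ↔ ∀ c ∈ C, ∃ d ∈ D, d = c ∨ G.Adj d c

/-- If `C` is a domination core of `G` and `v_r ∉ C`, then a set of vertices avoiding
`v_r` is a dominating set of `G` iff it is a dominating set of `G - v_r`. -/
theorem dominates_iff_dominates_delete {V : Type*} (G : SimpleGraph V) (C : Set V)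
    (hC : DomCore G C) (vr : V) (hvr : vr ∉ C)
    (D : Set ↥{v : V | v ≠ vr}) :
    Dominates G (Subtype.val '' D) ↔ Dominates (G.induce {v : V | v ≠ vr}) D := by
  constructor
  · intro h v
    obtain ⟨d, ⟨d₀, hd₀, rfl⟩, hdv⟩ := h ↑v
    refine ⟨d₀, hd₀, ?_⟩
    rcases hdv with heq | hadj
    · exact Or.inl (Subtype.ext heq)
    · exact Or.inr hadj
  · intro h
    apply (hC _).mpr
    intro c hc
    have hcne : c ≠ vr := fun e => hvr (e ▸ hc)
    obtain ⟨d, hd, hdc⟩ := h ⟨c, hcne⟩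
    refine ⟨↑d, ⟨d, hd, rfl⟩, ?_⟩
    rcases hdc with heq | hadj
    · exact Or.inl (congrArg Subtype.val heq)
    · exact Or.inr hadj
end
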